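/- arXiv:2504.07628 — 5 statements merged into one kernel-verified Lean document; each statement's English description precedes it below -/
import Mathlib

section
/- Let L_+ be the Laplacian of a connected weighted graph on n nodes with positive edge weights, let i ≠ j, let e_{ij} be the vector with 1 in position i, −1 in position j, and 0 elsewhere, and let r_{ij} = e_{ij}^T L_+^† e_{ij} be the effective resistance between i and j. Define L = L_+ − k e_{ij} e_{ij}^T for k > 0. If k < r_{ij}^{-1}, then L is positive semidefinite with dim ker L = 1 (kernel spanned by the all-ones vector), and L is positive definite on the orthogonal complement of the all-ones vector. -/
/-!
Let `A = L₊` and `A v = e`, so that `r = e ⬝ᵥ v = v ⬝ᵥ A v`. Cauchy–Schwarz for the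
semi-inner product `⟨x, y⟩ = x ⬝ᵥ A y` gives `(e ⬝ᵥ w)² = ⟨v, w⟩² ≤ r ⟨w, w⟩`, hence
`w ⬝ᵥ L w = ⟨w, w⟩ - k (e ⬝ᵥ w)² ≥ (1 - k r) ⟨w, w⟩`. For `k r < 1` the form of `L` therefore
vanishes exactly where that of `A` does; since `e` lies in the range of the symmetric `A`, it is
orthogonal to `ker A`, and so `L` has the same kernel as `A`, namely the constants.
-/

open Matrix

namespace Matrix

variable {ι : Type*} [Fintype ι]

lemma dotProduct_sub_smul_vecMulVec_mulVec {R : Type*} [CommRing R] (A : Matrix ι ι R) (k : R)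
    (e w : ι → R) :
    w ⬝ᵥ (A - k • vecMulVec e e) *ᵥ w = w ⬝ᵥ A *ᵥ w - k * (e ⬝ᵥ w) ^ 2 := by
  rw [sub_mulVec, smul_mulVec, vecMulVec_mulVec, op_smul_eq_smul, dotProduct_sub,
    dotProduct_smul, dotProduct_smul, dotProduct_comm w e, smul_eq_mul, smul_eq_mul]
  ring

lemma ite_ite_dotProduct {R : Type*} [DecidableEq ι] [Ring R] {i j : ι} (hij : i ≠ j)
    (w : ι → R) :
    (fun l => if l = i then (1 : R) else if l = j then -1 else 0) ⬝ᵥ w = w i - w j := by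
  have : (fun l => if l = i then (1 : R) else if l = j then -1 else 0)
      = Pi.single i 1 - Pi.single j 1 := by
    funext l
    by_cases hi : l = i <;> by_cases hj : l = j <;> simp_all
  rw [this, sub_dotProduct, single_one_dotProduct, single_one_dotProduct]

lemma const_eq_zero_of_dotProduct_one_eq_zero {c : ℝ}
    (h : (fun _ : ι => c) ⬝ᵥ (fun _ => 1) = 0) : (fun _ : ι => c) = 0 := by
  funext x
  have : 0 < (Fintype.card ι : ℝ) := by exact_mod_cast Fintype.card_pos_iff.mpr ⟨x⟩
  simp only [dotProduct, mul_one, Finset.sum_const, Finset.card_univ, nsmul_eq_mul] at h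
  simpa using (mul_eq_zero.mp h).resolve_left this.ne'

lemma finrank_ker_toLin'_eq_one [DecidableEq ι] [Nonempty ι] {M : Matrix ι ι ℝ}
    (hM : ∀ w : ι → ℝ, M *ᵥ w = 0 ↔ ∃ c : ℝ, w = fun _ => c) :
    Module.finrank ℝ (LinearMap.ker (toLin' M)) = 1 := by
  have hspan : LinearMap.ker (toLin' M) = ℝ ∙ (fun _ => (1 : ℝ)) := by
    ext w
    rw [LinearMap.mem_ker, toLin'_apply, Submodule.mem_span_singleton, hM w]
    constructor
    · rintro ⟨c, rfl⟩
      exact ⟨c, by funext; simp⟩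
    · rintro ⟨c, rfl⟩
      exact ⟨c, by funext; simp⟩
  rw [hspan]
  exact finrank_span_singleton (Function.const_ne_zero.mpr one_ne_zero)

namespace PosSemidef

variable {A : Matrix ι ι ℝ}

lemma dotProduct_mulVec_comm (hA : A.PosSemidef) (x y : ι → ℝ) :
    x ⬝ᵥ A *ᵥ y = y ⬝ᵥ A *ᵥ x := by
  have hT : Aᵀ = A := by rw [← conjTranspose_eq_transpose_of_trivial, hA.isHermitian.eq]
  rw [dotProduct_mulVec, ← mulVec_transpose, hT, dotProduct_comm]

lemma dotProduct_mulVec_self_nonneg (hA : A.PosSemidef) (x : ι → ℝ) : 0 ≤ x ⬝ᵥ A *ᵥ x := by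
  simpa using hA.dotProduct_mulVec_nonneg x

lemma sq_dotProduct_mulVec_le (hA : A.PosSemidef) (x y : ι → ℝ) :
    (x ⬝ᵥ A *ᵥ y) ^ 2 ≤ (x ⬝ᵥ A *ᵥ x) * (y ⬝ᵥ A *ᵥ y) := by
  have hquad : ∀ t : ℝ,
      0 ≤ (x ⬝ᵥ A *ᵥ x) * (t * t) + 2 * (x ⬝ᵥ A *ᵥ y) * t + y ⬝ᵥ A *ᵥ y := by
    intro t
    have h := hA.dotProduct_mulVec_self_nonneg (t • x + y)
    simp only [mulVec_add, mulVec_smul, dotProduct_add, add_dotProduct, dotProduct_smul,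
      smul_dotProduct, smul_eq_mul, hA.dotProduct_mulVec_comm y x] at h
    linarith
  have hdiscrim := discrim_le_zero hquad
  rw [discrim] at hdiscrim
  nlinarith

variable {e v : ι → ℝ}

lemma dotProduct_eq_of_mulVec_eq (hA : A.PosSemidef) (hv : A *ᵥ v = e) (w : ι → ℝ) :
    e ⬝ᵥ w = v ⬝ᵥ A *ᵥ w := by
  rw [← hv, dotProduct_comm, hA.dotProduct_mulVec_comm]

lemma sq_dotProduct_le_of_mulVec_eq (hA : A.PosSemidef) (hv : A *ᵥ v = e) (w : ι → ℝ) :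
    (e ⬝ᵥ w) ^ 2 ≤ (e ⬝ᵥ v) * (w ⬝ᵥ A *ᵥ w) := by
  rw [hA.dotProduct_eq_of_mulVec_eq hv, hA.dotProduct_eq_of_mulVec_eq hv]
  exact hA.sq_dotProduct_mulVec_le v w

lemma mul_dotProduct_mulVec_le_sub_smul_vecMulVec (hA : A.PosSemidef) (hv : A *ᵥ v = e)
    {k : ℝ} (hk : 0 ≤ k) (w : ι → ℝ) :
    (1 - k * (e ⬝ᵥ v)) * (w ⬝ᵥ A *ᵥ w) ≤ w ⬝ᵥ (A - k • vecMulVec e e) *ᵥ w := by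
  rw [dotProduct_sub_smul_vecMulVec_mulVec]
  nlinarith [mul_le_mul_of_nonneg_left (hA.sq_dotProduct_le_of_mulVec_eq hv w) hk]

lemma sub_smul_vecMulVec (hA : A.PosSemidef) (hv : A *ᵥ v = e) {k : ℝ} (hk : 0 ≤ k)
    (hkv : k * (e ⬝ᵥ v) ≤ 1) : (A - k • vecMulVec e e).PosSemidef := by
  have hvv : (vecMulVec e e).IsHermitian := by
    simpa using (posSemidef_vecMulVec_self_star e).isHermitian
  refine of_dotProduct_mulVec_nonneg (hA.isHermitian.sub (hvv.smul (IsSelfAdjoint.all k)))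
    fun w => ?_
  have hle := hA.mul_dotProduct_mulVec_le_sub_smul_vecMulVec hv hk w
  have hnonneg := hA.dotProduct_mulVec_self_nonneg w
  simp only [star_trivial]
  nlinarith

lemma sub_smul_vecMulVec_mulVec_eq_zero_iff (hA : A.PosSemidef) (hv : A *ᵥ v = e) {k : ℝ}
    (hk : 0 ≤ k) (hkv : k * (e ⬝ᵥ v) < 1) (w : ι → ℝ) :
    (A - k • vecMulVec e e) *ᵥ w = 0 ↔ A *ᵥ w = 0 := by
  constructor
  · intro hw
    have hL : w ⬝ᵥ (A - k • vecMulVec e e) *ᵥ w = 0 := by rw [hw, dotProduct_zero]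
    have hle := hA.mul_dotProduct_mulVec_le_sub_smul_vecMulVec hv hk w
    have hnonneg := hA.dotProduct_mulVec_self_nonneg w
    have hq : w ⬝ᵥ A *ᵥ w = 0 := by nlinarith
    exact (hA.dotProduct_mulVec_zero_iff w).mp (by simpa using hq)
  · intro hw
    have hew : e ⬝ᵥ w = 0 := by rw [hA.dotProduct_eq_of_mulVec_eq hv, hw, dotProduct_zero]
    rw [sub_mulVec, smul_mulVec, vecMulVec_mulVec, hew, hw]
    simp

end PosSemidef

end Matrix

theorem signed_laplacian_subcritical_gain_general
    (n : ℕ) (Lp : Matrix (Fin n) (Fin n) ℝ) (i j : Fin n) (hij : i ≠ j)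
    (hpsd : Lp.PosSemidef)
    (hker : ∀ w : Fin n → ℝ, Lp *ᵥ w = 0 ↔ ∃ c : ℝ, w = fun _ => c)
    (eij : Fin n → ℝ)
    (heij : eij = fun l => if l = i then (1 : ℝ) else if l = j then -1 else 0)
    (v : Fin n → ℝ) (hv : Lp *ᵥ v = eij)
    (rij : ℝ) (hrij : rij = v i - v j)
    (k : ℝ) (hk : 0 < k) (hklt : k < rij⁻¹)
    (L : Matrix (Fin n) (Fin n) ℝ)
    (hL : L = Lp - k • vecMulVec eij eij) :
    L.PosSemidef ∧
    (∀ w : Fin n → ℝ, L *ᵥ w = 0 ↔ ∃ c : ℝ, w = fun _ => c) ∧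
    Module.finrank ℝ ↥(LinearMap.ker (Matrix.toLin' L)) = 1 ∧
    (∀ w : Fin n → ℝ, w ⬝ᵥ (fun _ => 1) = 0 → w ≠ 0 → 0 < w ⬝ᵥ (L *ᵥ w)) := by
  have hr : 0 < rij := inv_pos.mp (hk.trans hklt)
  have hkv : k * (eij ⬝ᵥ v) < 1 := by
    rw [heij, ite_ite_dotProduct hij, ← hrij]
    exact (mul_lt_mul_of_pos_right hklt hr).trans_eq (inv_mul_cancel₀ hr.ne')
  have hpsdL : L.PosSemidef := hL ▸ hpsd.sub_smul_vecMulVec hv hk.le hkv.le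
  have hkerL : ∀ w : Fin n → ℝ, L *ᵥ w = 0 ↔ ∃ c : ℝ, w = fun _ => c := fun w =>
    hL ▸ (hpsd.sub_smul_vecMulVec_mulVec_eq_zero_iff hv hk.le hkv w).trans (hker w)
  refine ⟨hpsdL, hkerL, ?_, ?_⟩
  · have : Nonempty (Fin n) := ⟨i⟩
    exact finrank_ker_toLin'_eq_one hkerL
  · intro w hperp hne
    refine (hpsdL.dotProduct_mulVec_self_nonneg w).lt_of_ne fun h => hne ?_
    obtain ⟨c, rfl⟩ :=
      (hkerL w).mp ((hpsdL.dotProduct_mulVec_zero_iff w).mp (by simpa using h.symm))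
    exact const_eq_zero_of_dotProduct_one_eq_zero hperp

/-- If `L = L₊ - k e_{ij} e_{ij}ᵀ` with `L₊` a connected-graph Laplacian
(positive semidefinite, kernel spanned by the all-ones vector) and
`0 < k < r_{ij}⁻¹` where `r_{ij}` is the effective resistance between `i` and
`j` (`v = L₊† e_{ij}`, i.e. `L₊ v = e_{ij}`, `v ⟂ 1`, `r_{ij} = v_i - v_j`),
then `L` is positive semidefinite, its kernel is spanned by the all-ones
vector (so `dim ker L = 1`), and `L` is positive definite on `1ⁿ^⊥`. -/
theorem signed_laplacian_subcritical_gain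
    (n : ℕ) (Lp : Matrix (Fin n) (Fin n) ℝ) (i j : Fin n) (hij : i ≠ j)
    (hsymm : Lp.IsSymm) (hpsd : Lp.PosSemidef)
    (hker : ∀ w : Fin n → ℝ, Lp *ᵥ w = 0 ↔ ∃ c : ℝ, w = fun _ => c)
    (eij : Fin n → ℝ)
    (heij : eij = fun l => if l = i then (1 : ℝ) else if l = j then -1 else 0)
    (v : Fin n → ℝ) (hv : Lp *ᵥ v = eij) (hvperp : v ⬝ᵥ (fun _ => 1) = 0)
    (rij : ℝ) (hrij : rij = v i - v j) (hrpos : 0 < rij)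
    (k : ℝ) (hk : 0 < k) (hklt : k < rij⁻¹)
    (L : Matrix (Fin n) (Fin n) ℝ)
    (hL : L = Lp - k • vecMulVec eij eij) :
    L.PosSemidef ∧
    (∀ w : Fin n → ℝ, L *ᵥ w = 0 ↔ ∃ c : ℝ, w = fun _ => c) ∧
    Module.finrank ℝ ↥(LinearMap.ker (Matrix.toLin' L)) = 1 ∧
    (∀ w : Fin n → ℝ, w ⬝ᵥ (fun _ => 1) = 0 → w ≠ 0 → 0 < w ⬝ᵥ (L *ᵥ w)) :=
  signed_laplacian_subcritical_gain_general n Lp i j hij hpsd hker eij heij v hv rij hrij k hk hklt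
    L hL
end

section
/- With the same setup, if k = r_{ij}^{-1}, then L = L_+ − k e_{ij} e_{ij}^T is positive semidefinite, dim ker L = 2, and ker L = span{1_n, v} where v = L_+^† e_{ij}; in particular L v = 0. -/
/-! `L = L₊ - r⁻¹ e eᵀ`, with `e = L₊ v` and `r = vᵀ L₊ v`, is Wedderburn's rank-one reduction
of `L₊` along `v`. Its quadratic form at `x` is that of `L₊` at `x - (eᵀx / r) v`, so it is positive
semidefinite; and `L x = 0` iff `L₊ (x - (eᵀx / r) v) = 0`, so `ker L = ker L₊ ⊔ ℝ v = span {1, v}`.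
Since `v ⊥ 1`, these two vectors are independent and the kernel is two-dimensional. -/

open Matrix

namespace Matrix

variable {ι : Type*} [Fintype ι]

lemma IsSymm.dotProduct_mulVec_comm {α : Type*} [CommSemiring α] {A : Matrix ι ι α}
    (hA : A.IsSymm) (u w : ι → α) : u ⬝ᵥ (A *ᵥ w) = (A *ᵥ u) ⬝ᵥ w := by
  rw [dotProduct_mulVec, ← mulVec_transpose, hA.eq]

noncomputable def wedderburnReduction (A : Matrix ι ι ℝ) (v : ι → ℝ) : Matrix ι ι ℝ :=
  A - (v ⬝ᵥ (A *ᵥ v))⁻¹ • vecMulVec (A *ᵥ v) (A *ᵥ v)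

variable {A : Matrix ι ι ℝ} {v : ι → ℝ}

lemma wedderburnReduction_mulVec (x : ι → ℝ) :
    wedderburnReduction A v *ᵥ x
      = A *ᵥ x - ((v ⬝ᵥ (A *ᵥ v))⁻¹ * ((A *ᵥ v) ⬝ᵥ x)) • (A *ᵥ v) := by
  simp [wedderburnReduction, sub_mulVec, smul_mulVec, vecMulVec_mulVec, smul_smul]

lemma wedderburnReduction_mulVec_self (h : v ⬝ᵥ (A *ᵥ v) ≠ 0) :
    wedderburnReduction A v *ᵥ v = 0 := by
  rw [wedderburnReduction_mulVec, dotProduct_comm (A *ᵥ v), inv_mul_cancel₀ h, one_smul, sub_self]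

lemma PosSemidef.wedderburnReduction (hA : A.PosSemidef) :
    (wedderburnReduction A v).PosSemidef := by
  have hsymm : A.IsSymm := isHermitian_iff_isSymm.mp hA.isHermitian
  refine posSemidef_iff_dotProduct_mulVec.mpr ⟨?_, fun x => ?_⟩
  · refine hA.isHermitian.sub (IsHermitian.smul ?_ (IsSelfAdjoint.all _))
    simpa using (posSemidef_vecMulVec_self_star (A *ᵥ v)).isHermitian
  obtain ⟨r, hr⟩ : ∃ r, v ⬝ᵥ (A *ᵥ v) = r := ⟨_, rfl⟩
  obtain ⟨a, ha⟩ : ∃ a, (A *ᵥ v) ⬝ᵥ x = a := ⟨_, rfl⟩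
  have hxv : x ⬝ᵥ (A *ᵥ v) = a := dotProduct_comm x _ ▸ ha
  have hvx : v ⬝ᵥ (A *ᵥ x) = a := hsymm.dotProduct_mulVec_comm v x ▸ ha
  have hq := (posSemidef_iff_dotProduct_mulVec.mp hA).2 (x - (r⁻¹ * a) • v)
  simp only [star_trivial, mulVec_sub, mulVec_smul, dotProduct_sub, sub_dotProduct,
    smul_dotProduct, dotProduct_smul, smul_eq_mul, hxv, hvx, hr] at hq
  rw [star_trivial, wedderburnReduction_mulVec, dotProduct_sub, dotProduct_smul, smul_eq_mul,
    hxv, ha, hr]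
  have hr_inv : r⁻¹ * r⁻¹ * r = r⁻¹ := by simpa using mul_self_mul_inv r⁻¹
  linear_combination hq + a * a * hr_inv

lemma ker_toLin'_wedderburnReduction [DecidableEq ι] (hA : A.IsSymm) (h : v ⬝ᵥ (A *ᵥ v) ≠ 0) :
    LinearMap.ker (toLin' (wedderburnReduction A v)) = LinearMap.ker (toLin' A) ⊔ ℝ ∙ v := by
  apply le_antisymm
  · intro x hx
    rw [LinearMap.mem_ker, toLin'_apply, wedderburnReduction_mulVec, sub_eq_zero] at hx
    set c := (v ⬝ᵥ (A *ᵥ v))⁻¹ * ((A *ᵥ v) ⬝ᵥ x)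
    have hker : x - c • v ∈ LinearMap.ker (toLin' A) := by
      rw [LinearMap.mem_ker, toLin'_apply, mulVec_sub, mulVec_smul, hx, sub_self]
    simpa using
      Submodule.add_mem_sup hker (Submodule.smul_mem _ c (Submodule.mem_span_singleton_self v))
  · refine sup_le (fun x hx => ?_) ((Submodule.span_singleton_le_iff_mem _ _).mpr ?_)
    · rw [LinearMap.mem_ker, toLin'_apply] at hx ⊢
      rw [wedderburnReduction_mulVec, ← hA.dotProduct_mulVec_comm, hx]
      simp
    · rw [LinearMap.mem_ker, toLin'_apply]
      exact wedderburnReduction_mulVec_self h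

end Matrix

lemma linearIndependent_pair_of_dotProduct_eq_zero {ι R : Type*} [Fintype ι] [CommRing R]
    [LinearOrder R] [IsStrictOrderedRing R] {u w : ι → R} (hu : u ≠ 0) (hw : w ≠ 0)
    (huw : u ⬝ᵥ w = 0) : LinearIndependent R ![u, w] := by
  refine LinearIndependent.pair_iff.mpr fun s t hst => ?_
  have hs := congrArg (u ⬝ᵥ ·) hst
  have ht := congrArg (w ⬝ᵥ ·) hst
  simp only [dotProduct_add, dotProduct_smul, smul_eq_mul, huw, dotProduct_comm w u,
    dotProduct_zero, mul_zero, add_zero, zero_add] at hs ht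
  exact ⟨(mul_eq_zero.mp hs).resolve_right (mt dotProduct_self_eq_zero.mp hu),
    (mul_eq_zero.mp ht).resolve_right (mt dotProduct_self_eq_zero.mp hw)⟩

theorem signed_laplacian_critical_gain_general
    (n : ℕ) (Lp : Matrix (Fin n) (Fin n) ℝ) (i j : Fin n) (hij : i ≠ j)
    (hpsd : Lp.PosSemidef)
    (hker : ∀ w : Fin n → ℝ, Lp *ᵥ w = 0 ↔ ∃ c : ℝ, w = fun _ => c)
    (eij : Fin n → ℝ)
    (heij : eij = fun l => if l = i then (1 : ℝ) else if l = j then -1 else 0)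
    (v : Fin n → ℝ) (hv : Lp *ᵥ v = eij) (hvperp : v ⬝ᵥ (fun _ => 1) = 0)
    (rij : ℝ) (hrij : rij = v i - v j) (hrpos : 0 < rij)
    (k : ℝ) (hk : k = rij⁻¹)
    (L : Matrix (Fin n) (Fin n) ℝ)
    (hL : L = Lp - k • vecMulVec eij eij) :
    L.PosSemidef ∧
    Module.finrank ℝ ↥(LinearMap.ker (Matrix.toLin' L)) = 2 ∧
    LinearMap.ker (Matrix.toLin' L)
      = Submodule.span ℝ {(fun _ => (1 : ℝ)), v} ∧
    L *ᵥ v = 0 := by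
  have heij_single : eij = Pi.single i 1 - Pi.single j 1 := by
    ext l
    by_cases hi : l = i <;> by_cases hj : l = j <;> simp_all
  have hr : v ⬝ᵥ (Lp *ᵥ v) = rij := by
    simp [hv, heij_single, dotProduct_sub, hrij]
  have hW : L = wedderburnReduction Lp v := by rw [hL, hk, ← hr, ← hv]; rfl
  subst hW
  rw [← hr] at hrpos
  have hker_Lp : LinearMap.ker (toLin' Lp) = ℝ ∙ (fun _ => (1 : ℝ)) := by
    ext w
    simp [hker, Submodule.mem_span_singleton, funext_iff, eq_comm]
  have hker_L : LinearMap.ker (toLin' (wedderburnReduction Lp v))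
      = Submodule.span ℝ {(fun _ => (1 : ℝ)), v} := by
    rw [ker_toLin'_wedderburnReduction (isHermitian_iff_isSymm.mp hpsd.isHermitian) hrpos.ne',
      hker_Lp, Submodule.span_insert]
  have hindep : LinearIndependent ℝ ![(fun _ => (1 : ℝ)), v] := by
    refine linearIndependent_pair_of_dotProduct_eq_zero ?_ ?_ (by rw [dotProduct_comm, hvperp])
    · exact fun h => one_ne_zero (congrFun h i)
    · rintro rfl; simp at hrpos
  refine ⟨hpsd.wedderburnReduction, ?_, hker_L, wedderburnReduction_mulVec_self hrpos.ne'⟩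
  rw [hker_L, ← range_cons_cons_empty _ _ ![], finrank_span_eq_card hindep, Fintype.card_fin]

/-- At the critical gain `k = r_{ij}⁻¹`, the signed Laplacian
`L = L₊ - k e_{ij} e_{ij}ᵀ` is positive semidefinite, has a two-dimensional
kernel `ker L = span{1ₙ, v}` where `v = L₊† e_{ij}`; in particular `L v = 0`. -/
theorem signed_laplacian_critical_gain
    (n : ℕ) (Lp : Matrix (Fin n) (Fin n) ℝ) (i j : Fin n) (hij : i ≠ j)
    (hsymm : Lp.IsSymm) (hpsd : Lp.PosSemidef)
    (hker : ∀ w : Fin n → ℝ, Lp *ᵥ w = 0 ↔ ∃ c : ℝ, w = fun _ => c)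
    (eij : Fin n → ℝ)
    (heij : eij = fun l => if l = i then (1 : ℝ) else if l = j then -1 else 0)
    (v : Fin n → ℝ) (hv : Lp *ᵥ v = eij) (hvperp : v ⬝ᵥ (fun _ => 1) = 0)
    (rij : ℝ) (hrij : rij = v i - v j) (hrpos : 0 < rij)
    (k : ℝ) (hk : k = rij⁻¹)
    (L : Matrix (Fin n) (Fin n) ℝ)
    (hL : L = Lp - k • vecMulVec eij eij) :
    L.PosSemidef ∧
    Module.finrank ℝ ↥(LinearMap.ker (Matrix.toLin' L)) = 2 ∧
    LinearMap.ker (Matrix.toLin' L)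
      = Submodule.span ℝ {(fun _ => (1 : ℝ)), v} ∧
    L *ᵥ v = 0 :=
  signed_laplacian_critical_gain_general n Lp i j hij hpsd hker eij heij v hv hvperp rij hrij hrpos
    k hk L hL
end

section
/- Let L_+ be the Laplacian of a connected graph with positive weights and let L = L_+ − k e_{ij} e_{ij}^T with k > 0. If w ⟂ 1_n, L w = 0, and w_i = w_j, then w = 0. Consequently any nonzero kernel vector of L orthogonal to 1_n is a scalar multiple of v = L_+^† e_{ij}. -/
open Matrix

lemma vmv_mulVec {n : ℕ} (a b w : Fin n → ℝ) :
    vecMulVec a b *ᵥ w = (b ⬝ᵥ w) • a := by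
  funext l
  simp [mulVec, dotProduct, vecMulVec_apply, Finset.mul_sum, mul_comm, mul_assoc, mul_left_comm]

/-- For `L = L₊ - k e_{ij} e_{ij}ᵀ` with `L₊` a connected-graph Laplacian:
any `w ⟂ 1ₙ` with `L w = 0` and `w_i = w_j` vanishes; consequently every
kernel vector of `L` orthogonal to `1ₙ` is a scalar multiple of
`v = L₊† e_{ij}`. -/
theorem signed_laplacian_kernel_structure
    (n : ℕ) (Lp : Matrix (Fin n) (Fin n) ℝ) (i j : Fin n) (hij : i ≠ j)
    (hsymm : Lp.IsSymm) (hpsd : Lp.PosSemidef)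
    (hker : ∀ w : Fin n → ℝ, Lp *ᵥ w = 0 ↔ ∃ c : ℝ, w = fun _ => c)
    (eij : Fin n → ℝ)
    (heij : eij = fun l => if l = i then (1 : ℝ) else if l = j then -1 else 0)
    (v : Fin n → ℝ) (hv : Lp *ᵥ v = eij) (hvperp : v ⬝ᵥ (fun _ => 1) = 0)
    (k : ℝ) (hk : 0 < k)
    (L : Matrix (Fin n) (Fin n) ℝ)
    (hL : L = Lp - k • vecMulVec eij eij) :
    (∀ w : Fin n → ℝ, w ⬝ᵥ (fun _ => 1) = 0 → L *ᵥ w = 0 → w i = w j → w = 0) ∧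
    (∀ w : Fin n → ℝ, w ⬝ᵥ (fun _ => 1) = 0 → L *ᵥ w = 0 → ∃ c : ℝ, w = c • v) := by
  have hn : (n : ℝ) ≠ 0 := by
    have : 0 < n := Fin.pos_iff_nonempty.mpr ⟨i⟩
    exact_mod_cast this.ne'
  -- key: L w = 0 → Lp w = (k * (eij ⬝ᵥ w)) • eij
  have key : ∀ w : Fin n → ℝ, L *ᵥ w = 0 →
      Lp *ᵥ w = (k * (eij ⬝ᵥ w)) • eij := by
    intro w hw
    have : Lp *ᵥ w - k • ((eij ⬝ᵥ w) • eij) = 0 := by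
      rw [hL] at hw
      simpa [sub_mulVec, smul_mulVec, vmv_mulVec] using hw
    have := sub_eq_zero.mp this
    rw [this, smul_smul]
  -- dot of 1 with constant
  have hconst : ∀ (w : Fin n → ℝ) (c : ℝ), (w = fun _ => c) →
      w ⬝ᵥ (fun _ => 1) = 0 → w = 0 := by
    intro w c hwc hperp
    rw [hwc] at hperp
    have : c * n = 0 := by
      simpa [dotProduct, Finset.sum_const, mul_comm] using hperp
    have hc : c = 0 := by
      rcases mul_eq_zero.mp this with h | h
      · exact h
      · exact absurd h hn
    rw [hwc, hc]; rfl
  have heijdot : ∀ w : Fin n → ℝ, eij ⬝ᵥ w = w i - w j := by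
    intro w
    have h : eij ⬝ᵥ w = ∑ x, ((if x = i then w x else 0) + (if x = j then -w x else 0)) := by
      rw [heij, dotProduct]
      apply Finset.sum_congr rfl
      intro x _
      rcases eq_or_ne x i with rfl | hx
      · simp [hij]
      · rcases eq_or_ne x j with rfl | hy
        · simp [hx]
        · simp [hx, hy]
    rw [h, Finset.sum_add_distrib, Finset.sum_ite_eq' Finset.univ i,
      Finset.sum_ite_eq' Finset.univ j]
    simp [sub_eq_add_neg]
  constructor
  · intro w hperp hLw hwij
    have h1 := key w hLw
    have h2 : eij ⬝ᵥ w = 0 := by rw [heijdot, hwij, sub_self]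
    rw [h2, mul_zero, zero_smul] at h1
    obtain ⟨c, hc⟩ := (hker w).mp h1
    exact hconst w c hc hperp
  · intro w hperp hLw
    have h1 := key w hLw
    set c := k * (eij ⬝ᵥ w) with hc
    refine ⟨c, ?_⟩
    have h2 : Lp *ᵥ (w - c • v) = 0 := by
      rw [mulVec_sub, mulVec_smul, hv, h1, sub_self]
    obtain ⟨d, hd⟩ := (hker _).mp h2
    have h3 : (w - c • v) ⬝ᵥ (fun _ => 1) = 0 := by
      rw [sub_dotProduct, smul_dotProduct, hperp, hvperp, smul_zero, sub_zero]
    have h4 := hconst _ d hd h3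
    exact sub_eq_zero.mp h4
end

section
/- Let L be a symmetric n×n signed Laplacian (L 1_n = 0) partitioned into boundary/central blocks with L_CC invertible, and suppose dim ker L = 2 with ker L = span{1_n, v} for some v ⟂ 1_n. Write v = (v_B, v_C). Then v_B is not a scalar multiple of the all-ones vector 1_{n_B}. -/
open Matrix

/-- At a network singularity, the boundary component `v_B` of the nontrivial
kernel vector `v ⟂ 1ₙ` of the signed Laplacian `L` (with invertible central
block `L_CC`) is not a scalar multiple of the all-ones vector. -/
theorem boundary_component_not_constant
    (nB nC : ℕ)
    (L : Matrix (Fin nB ⊕ Fin nC) (Fin nB ⊕ Fin nC) ℝ)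
    (hsymm : L.IsSymm)
    (hones : L *ᵥ (fun _ => 1) = 0)
    (hCC : IsUnit (L.toBlocks₂₂).det)
    (v : Fin nB ⊕ Fin nC → ℝ)
    (hv0 : v ≠ 0) (hvperp : v ⬝ᵥ (fun _ => 1) = 0) (hvker : L *ᵥ v = 0) :
    ¬ ∃ a : ℝ, ∀ i : Fin nB, v (Sum.inl i) = a := by
  rintro ⟨a, ha⟩
  set w : Fin nB ⊕ Fin nC → ℝ := v - a • (1 : Fin nB ⊕ Fin nC → ℝ) with hw
  have hwl : ∀ i : Fin nB, w (Sum.inl i) = 0 := by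
    intro i; simp [hw, ha i]
  have hLw : L *ᵥ w = 0 := by
    have h1 : (fun _ => (1:ℝ) : Fin nB ⊕ Fin nC → ℝ) = (1 : Fin nB ⊕ Fin nC → ℝ) := rfl
    have : L *ᵥ w = L *ᵥ v - a • (L *ᵥ (fun _ => 1)) := by
      simp [hw, Matrix.mulVec_sub, Matrix.mulVec_smul, h1]
    rw [this, hvker, hones]; simp
  -- central rows give L_CC *ᵥ w_C = 0
  have hwc : (L.toBlocks₂₂) *ᵥ (fun k => w (Sum.inr k)) = 0 := by
    funext j
    have h0 : (L *ᵥ w) (Sum.inr j) = 0 := by rw [hLw]; rfl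
    have : (L *ᵥ w) (Sum.inr j)
        = ∑ i : Fin nB, L (Sum.inr j) (Sum.inl i) * w (Sum.inl i)
          + ∑ k : Fin nC, L (Sum.inr j) (Sum.inr k) * w (Sum.inr k) := by
      simp [Matrix.mulVec, dotProduct, Fintype.sum_sum_type]
    rw [this] at h0
    simp only [hwl, mul_zero, Finset.sum_const_zero, zero_add] at h0
    simpa [Matrix.mulVec, dotProduct, Matrix.toBlocks₂₂] using h0
  have hwc0 : (fun k => w (Sum.inr k)) = 0 := by
    have hinv : Invertible (L.toBlocks₂₂) := (L.toBlocks₂₂).invertibleOfIsUnitDet hCC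
    have := congrArg (fun x => (L.toBlocks₂₂)⁻¹ *ᵥ x) hwc
    simpa [Matrix.mulVec_mulVec, Matrix.nonsing_inv_mul _ hCC] using this
  have hweq : w = 0 := by
    funext x
    cases x with
    | inl i => exact hwl i
    | inr k => exact congrFun hwc0 k
  have hva : v = a • (1 : Fin nB ⊕ Fin nC → ℝ) := by
    have := sub_eq_zero.mp hweq
    simpa [hw] using sub_eq_zero.mp hweq
  -- orthogonality: a * card = 0
  have hcard : a * (Fintype.card (Fin nB ⊕ Fin nC) : ℝ) = 0 := by
    have := hvperp
    rw [hva] at this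
    simpa [dotProduct, Finset.mul_sum, mul_comm] using this
  rcases mul_eq_zero.mp hcard with h | h
  · exact hv0 (by rw [hva, h]; simp)
  · have hempty : Fintype.card (Fin nB ⊕ Fin nC) = 0 := by exact_mod_cast h
    have : IsEmpty (Fin nB ⊕ Fin nC) := Fintype.card_eq_zero_iff.mp hempty
    exact hv0 (funext fun x => (this.false x).elim)
end

section
/- Let L be as above with dim ker L = 2, ker L = span{1_n, v}, v ⟂ 1_n, L_CC invertible, and let L̂ = L_BB − L_BC L_CC^{-1} L_CB be the Kron reduction. Let v̂ ⟂ 1_{n_B} span the kernel of L̂ restricted to 1_{n_B}^⊥ (i.e., ker L̂ = span{1_{n_B}, v̂}). Then writing v_B = a 1_{n_B} + ṽ_B with ṽ_B ⟂ 1_{n_B}, there exists a nonzero scalar a_B with ṽ_B = a_B v̂. -/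
open Matrix

private lemma kron_helper (nB nC : ℕ)
    (L : Matrix (Fin nB ⊕ Fin nC) (Fin nB ⊕ Fin nC) ℝ)
    (hCC : IsUnit (L.toBlocks₂₂).det)
    (w : Fin nB ⊕ Fin nC → ℝ) (hw : L *ᵥ w = 0)
    (Lhat : Matrix (Fin nB) (Fin nB) ℝ)
    (hLhat : Lhat = L.toBlocks₁₁ - L.toBlocks₁₂ * (L.toBlocks₂₂)⁻¹ * L.toBlocks₂₁) :
    Lhat *ᵥ (fun i => w (Sum.inl i)) = 0 ∧
      (fun j => w (Sum.inr j)) =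
        -(((L.toBlocks₂₂)⁻¹ * L.toBlocks₂₁) *ᵥ (fun i => w (Sum.inl i))) := by
  set A := L.toBlocks₁₁; set B := L.toBlocks₁₂; set C := L.toBlocks₂₁; set D := L.toBlocks₂₂
  set wB : Fin nB → ℝ := fun i => w (Sum.inl i)
  set wC : Fin nC → ℝ := fun j => w (Sum.inr j)
  have hwelim : w = Sum.elim wB wC := by funext x; cases x <;> rfl
  have hLfb : L = fromBlocks A B C D := (fromBlocks_toBlocks L).symm
  rw [hLfb, hwelim, fromBlocks_mulVec] at hw
  have eq1 : A *ᵥ wB + B *ᵥ wC = 0 := by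
    funext i; exact congrFun hw (Sum.inl i)
  have eq2 : C *ᵥ wB + D *ᵥ wC = 0 := by
    funext j; exact congrFun hw (Sum.inr j)
  have hwC : wC = -((D⁻¹ * C) *ᵥ wB) := by
    have h1 : D *ᵥ wC = -(C *ᵥ wB) := by
      rw [eq_neg_iff_add_eq_zero, add_comm]; exact eq2
    have := congrArg (fun x => D⁻¹ *ᵥ x) h1
    simpa [mulVec_mulVec, Matrix.nonsing_inv_mul D hCC, mulVec_neg] using this
  refine ⟨?_, hwC⟩
  rw [hwC] at eq1
  rw [hLhat]
  have h2 : (A - B * D⁻¹ * C) *ᵥ wB = A *ᵥ wB - B *ᵥ ((D⁻¹ * C) *ᵥ wB) := by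
    simp [sub_mulVec, mulVec_mulVec, Matrix.mul_assoc]
  rw [h2]
  simpa [mulVec_neg, sub_eq_add_neg, neg_neg] using eq1

/-- The projection `ṽ_B` of the boundary component of the critical kernel
vector `v` onto `1^⊥` is a nonzero multiple of the critical eigenvector `v̂`
of the Kron-reduced Laplacian `L̂ = L_BB - L_BC L_CC⁻¹ L_CB`. -/
theorem boundary_component_aligned_with_reduced_eigenvector
    (nB nC : ℕ)
    (L : Matrix (Fin nB ⊕ Fin nC) (Fin nB ⊕ Fin nC) ℝ)
    (hsymm : L.IsSymm)
    (hones : L *ᵥ (fun _ => 1) = 0)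
    (hCC : IsUnit (L.toBlocks₂₂).det)
    (v : Fin nB ⊕ Fin nC → ℝ)
    (hv0 : v ≠ 0) (hvperp : v ⬝ᵥ (fun _ => 1) = 0) (hvker : L *ᵥ v = 0)
    (hkerL : ∀ w : Fin nB ⊕ Fin nC → ℝ, L *ᵥ w = 0 →
      ∃ c d : ℝ, w = c • (fun _ => (1 : ℝ)) + d • v)
    (Lhat : Matrix (Fin nB) (Fin nB) ℝ)
    (hLhat : Lhat = L.toBlocks₁₁ - L.toBlocks₁₂ * (L.toBlocks₂₂)⁻¹ * L.toBlocks₂₁)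
    (vhat : Fin nB → ℝ)
    (hvhat0 : vhat ≠ 0) (hvhatperp : vhat ⬝ᵥ (fun _ => 1) = 0)
    (hvhatker : Lhat *ᵥ vhat = 0)
    (hkerLhat : ∀ w : Fin nB → ℝ, Lhat *ᵥ w = 0 →
      ∃ c d : ℝ, w = c • (fun _ => (1 : ℝ)) + d • vhat)
    (a : ℝ) (tvB : Fin nB → ℝ)
    (hdecomp : (fun i => v (Sum.inl i)) = (fun _ => a) + tvB)
    (htvBperp : tvB ⬝ᵥ (fun _ => 1) = 0) :
    ∃ aB : ℝ, aB ≠ 0 ∧ tvB = aB • vhat := by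
  have hnB : 0 < nB := by
    rcases Nat.eq_zero_or_pos nB with h | h
    · exfalso; apply hvhat0; subst h
      funext i; exact absurd i.2 (Nat.not_lt_zero _)
    · exact h
  obtain ⟨hkerB, hvC⟩ := kron_helper nB nC L hCC v hvker Lhat hLhat
  obtain ⟨honesB, honesC⟩ := kron_helper nB nC L hCC (fun _ => 1) hones Lhat hLhat
  have honesB' : Lhat *ᵥ (fun _ => (1 : ℝ)) = 0 := honesB
  have htvBker : Lhat *ᵥ tvB = 0 := by
    have h1 : tvB = (fun i => v (Sum.inl i)) - a • (fun _ => (1 : ℝ)) := by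
      funext i
      have h : v (Sum.inl i) = a + tvB i := congrFun hdecomp i
      simp [h]
    rw [h1, mulVec_sub, mulVec_smul, hkerB, honesB']
    simp
  obtain ⟨c, d, hcd⟩ := hkerLhat tvB htvBker
  have hc : c = 0 := by
    have h := congrArg (fun x => x ⬝ᵥ (fun _ => (1 : ℝ))) hcd
    simp only [add_dotProduct, smul_dotProduct, htvBperp, hvhatperp, smul_eq_mul,
      mul_zero, add_zero] at h
    have hone : ((fun _ => (1 : ℝ)) : Fin nB → ℝ) ⬝ᵥ (fun _ => (1 : ℝ)) = (nB : ℝ) := by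
      simp [dotProduct, Finset.sum_const, Finset.card_univ]
    rw [hone] at h
    have hnB' : (nB : ℝ) ≠ 0 := Nat.cast_ne_zero.mpr hnB.ne'
    rcases mul_eq_zero.mp h.symm with h' | h'
    · exact h'
    · exact absurd h' hnB'
  subst hc
  simp only [zero_smul, zero_add] at hcd
  refine ⟨d, ?_, hcd⟩
  intro hd
  subst hd
  simp only [zero_smul] at hcd
  have hvBconst : (fun i => v (Sum.inl i)) = fun _ => a := by
    funext i
    have h : v (Sum.inl i) = a + tvB i := congrFun hdecomp i
    rw [h, congrFun hcd i]; simp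
  have hvCconst : (fun j => v (Sum.inr j)) = fun _ => a := by
    rw [hvC, hvBconst]
    have h1 : (fun _ => a : Fin nB → ℝ) = a • (fun _ => (1:ℝ)) := by
      funext i; simp
    rw [h1, mulVec_smul, ← smul_neg, ← honesC]
    funext j; simp
  have hvconst : v = fun _ => a := by
    funext x
    cases x with
    | inl i => exact congrFun hvBconst i
    | inr j => exact congrFun hvCconst j
  have ha : a = 0 := by
    rw [hvconst] at hvperp
    simp only [dotProduct, mul_one, Finset.sum_const, Finset.card_univ,
      Fintype.card_sum, Fintype.card_fin, nsmul_eq_mul] at hvperp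
    have hn : ((nB + nC : ℕ) : ℝ) ≠ 0 := Nat.cast_ne_zero.mpr (by omega)
    exact (mul_eq_zero.mp hvperp).resolve_left hn
  apply hv0
  rw [hvconst]
  funext x
  exact ha
end
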